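/- arXiv:2306.03161 — 6 statements merged into one kernel-verified Lean document; each statement's English description precedes it below -/
import Mathlib

section
/- Let n ≥ 1 and let x, y, z ∈ F₂ⁿ. Then the uniform average over all n×n matrices A over F₂ satisfies 2^{−n²} · Σ_{A ∈ F₂^{n×n}} (−1)^{xᵀAx + yᵀAy + zᵀAz} = [x=y][z=0] + [x=z][y=0] + [y=z][x=0] − 2·[x=0][y=0][z=0], where [P] denotes 1 if the condition P holds and 0 otherwise, and the exponent is computed in F₂ with (−1)^b meaning 1 if b = 0 and −1 if b = 1. -/
/-!
Averaging a character over a finite group gives `1` for the trivial character and `0`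
otherwise. The exponent `xᵀAx + yᵀAy + zᵀAz` is additive in `A` and, as a functional on
matrices, is the pairing with `xxᵀ + yyᵀ + zzᵀ`; so the average is the indicator of
`xxᵀ + yyᵀ + zzᵀ = 0`. Over `F₂` the diagonal of this equation says `z = x + y`, and the
off-diagonal entries then say `xyᵀ` is symmetric, i.e. `x = 0`, `y = 0` or `x = y`. The
three resulting events pairwise intersect in `{x = y = z = 0}`, whence the `- 2` term by
inclusion–exclusion.
-/

open Matrix

/-- `(-1)^b` for `b : ZMod 2`, as a real number. -/
def chi (b : ZMod 2) : ℝ := if b = 0 then 1 else -1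

lemma ZMod.eq_zero_or_eq_one_of_two (a : ZMod 2) : a = 0 ∨ a = 1 := by
  revert a; decide

lemma chi_injective : Function.Injective chi := by
  intro a b
  rcases a.eq_zero_or_eq_one_of_two with rfl | rfl <;>
    rcases b.eq_zero_or_eq_one_of_two with rfl | rfl <;> norm_num [chi]

def chiAddChar : AddChar (ZMod 2) ℝ where
  toFun := chi
  map_zero_eq_one' := if_pos rfl
  map_add_eq_mul' a b := by
    rcases a.eq_zero_or_eq_one_of_two with rfl | rfl <;>
      rcases b.eq_zero_or_eq_one_of_two with rfl | rfl <;>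
      simp only [chi, CharTwo.add_self_eq_zero, add_zero, zero_add] <;> norm_num

lemma sum_chi_addMonoidHom {G : Type*} [AddGroup G] [Fintype G] (f : G →+ ZMod 2) :
    ∑ g, chi (f g) = if f = 0 then (Fintype.card G : ℝ) else 0 := by
  have hzero : chiAddChar.compAddMonoidHom f = 0 ↔ f = 0 := by
    have h0 : chiAddChar.compAddMonoidHom (0 : G →+ ZMod 2) = 0 := by
      ext; simp [chiAddChar]
    rw [← (chiAddChar.compAddMonoidHom_injective_right chi_injective).eq_iff, h0]
  exact (chiAddChar.compAddMonoidHom f).sum_eq_ite.trans (by simp only [hzero])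

section QuadraticForm

variable {ι R : Type*} [Fintype ι] [CommSemiring R]

def quadFormEval (x : ι → R) : Matrix ι ι R →+ R where
  toFun A := x ⬝ᵥ A *ᵥ x
  map_zero' := by simp
  map_add' A B := by simp [add_mulVec]

lemma quadFormEval_apply (x : ι → R) (A : Matrix ι ι R) : quadFormEval x A = x ⬝ᵥ A *ᵥ x := rfl

lemma quadFormEval_single [DecidableEq ι] (x : ι → R) (i j : ι) (c : R) :
    quadFormEval x (single i j c) = c * vecMulVec x x i j := by
  simp [quadFormEval, single_mulVec_eq, vecMulVec_apply]
  ring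

lemma quadFormEval_add_add_eq_zero_iff (x y z : ι → R) :
    quadFormEval x + quadFormEval y + quadFormEval z = 0 ↔
      vecMulVec x x + vecMulVec y y + vecMulVec z z = 0 := by
  classical
  constructor
  · intro h
    ext i j
    simpa [quadFormEval_single] using DFunLike.congr_fun h (single i j 1)
  · intro h
    refine ext_addMonoidHom fun i j ↦ AddMonoidHom.ext fun c ↦ ?_
    simp [quadFormEval_single, ← mul_add, ← Matrix.add_apply, h]

end QuadraticForm

lemma exists_eq_smul_of_mul_comm {ι K : Type*} [Field K] {x y : ι → K} (hx : x ≠ 0)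
    (h : ∀ i j, x i * y j = y i * x j) : ∃ c : K, y = c • x := by
  obtain ⟨i₀, hi₀⟩ := Function.ne_iff.mp hx
  refine ⟨y i₀ / x i₀, funext fun j ↦ ?_⟩
  rw [Pi.smul_apply, smul_eq_mul, div_mul_eq_mul_div, ← h, mul_div_cancel_left₀ _ hi₀]

lemma vecMulVec_self_add_add_eq_zero_iff {ι : Type*} (x y z : ι → ZMod 2) :
    vecMulVec x x + vecMulVec y y + vecMulVec z z = 0 ↔
      (x = y ∧ z = 0) ∨ (x = z ∧ y = 0) ∨ (y = z ∧ x = 0) := by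
  have add_self (v : ι → ZMod 2) : v + v = 0 := funext fun _ ↦ CharTwo.add_self_eq_zero _
  constructor
  · intro h
    have hij : ∀ i j, x i * x j + y i * y j + z i * z j = 0 := fun i j ↦ by
      simpa [vecMulVec_apply] using congr_fun₂ h i j
    -- `a * a = a` in `F₂`
    have hz : z = x + y := funext fun i ↦ by
      have key : ∀ a b c : ZMod 2, a * a + b * b + c * c = 0 → c = a + b := by decide
      exact key _ _ _ (hij i i)
    have hcomm : ∀ i j, x i * y j = y i * x j := fun i j ↦ by
      have key : ∀ a b c d : ZMod 2,
          a * b + c * d + (a + c) * (b + d) = 0 → a * d = c * b := by decide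
      exact key _ _ _ _ (by simpa [hz] using hij i j)
    subst hz
    by_cases hx : x = 0
    · simp [hx]
    obtain ⟨c, rfl⟩ := exists_eq_smul_of_mul_comm hx hcomm
    rcases c.eq_zero_or_eq_one_of_two with rfl | rfl
    · simp
    · simp [add_self]
  · rintro (⟨rfl, rfl⟩ | ⟨rfl, rfl⟩ | ⟨rfl, rfl⟩) <;> simp [← add_vecMulVec, add_self]

lemma ite_or_or_eq_inclusion_exclusion {α : Type*} [Zero α] [DecidableEq α] (x y z : α) :
    (if (x = y ∧ z = 0) ∨ (x = z ∧ y = 0) ∨ (y = z ∧ x = 0) then (1 : ℝ) else 0) =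
      (if x = y then 1 else 0) * (if z = 0 then 1 else 0)
      + (if x = z then 1 else 0) * (if y = 0 then 1 else 0)
      + (if y = z then 1 else 0) * (if x = 0 then 1 else 0)
      - 2 * ((if x = 0 then 1 else 0) * (if y = 0 then 1 else 0)
          * (if z = 0 then (1 : ℝ) else 0)) := by
  split_ifs <;> simp_all
  norm_num

lemma Matrix.card_eq {m n α : Type*} [Fintype m] [Fintype n] [DecidableEq m] [DecidableEq n]
    [Fintype α] :
    Fintype.card (Matrix m n α) = Fintype.card α ^ (Fintype.card m * Fintype.card n) := by
  change Fintype.card (m → n → α) = _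
  simp [← pow_mul, mul_comm]

theorem deg2_third_moment_general (n : ℕ) (x y z : Fin n → ZMod 2) :
    (2 ^ (n ^ 2) : ℝ)⁻¹ *
      ∑ A : Matrix (Fin n) (Fin n) (ZMod 2),
        chi (x ⬝ᵥ A.mulVec x + y ⬝ᵥ A.mulVec y + z ⬝ᵥ A.mulVec z)
    = (if x = y then 1 else 0) * (if z = 0 then 1 else 0)
      + (if x = z then 1 else 0) * (if y = 0 then 1 else 0)
      + (if y = z then 1 else 0) * (if x = 0 then 1 else 0)
      - 2 * ((if x = 0 then 1 else 0) * (if y = 0 then 1 else 0)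
          * (if z = 0 then (1 : ℝ) else 0)) := by
  have hsum := sum_chi_addMonoidHom (quadFormEval x + quadFormEval y + quadFormEval z)
  simp only [AddMonoidHom.add_apply, quadFormEval_apply, Matrix.card_eq, ZMod.card,
    Fintype.card_fin, ← sq, quadFormEval_add_add_eq_zero_iff,
    vecMulVec_self_add_add_eq_zero_iff] at hsum
  rw [← ite_or_or_eq_inclusion_exclusion, hsum]
  split_ifs <;> simp

/-- Third-moment character sum identity for random quadratic forms over `F₂`:
`E_A[(-1)^{xᵀAx + yᵀAy + zᵀAz}] = [x=y][z=0] + [x=z][y=0] + [y=z][x=0] - 2[x=0][y=0][z=0]`. -/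
theorem deg2_third_moment (n : ℕ) (hn : 1 ≤ n) (x y z : Fin n → ZMod 2) :
    (2 ^ (n ^ 2) : ℝ)⁻¹ *
      ∑ A : Matrix (Fin n) (Fin n) (ZMod 2),
        chi (x ⬝ᵥ A.mulVec x + y ⬝ᵥ A.mulVec y + z ⬝ᵥ A.mulVec z)
    = (if x = y then 1 else 0) * (if z = 0 then 1 else 0)
      + (if x = z then 1 else 0) * (if y = 0 then 1 else 0)
      + (if y = z then 1 else 0) * (if x = 0 then 1 else 0)
      - 2 * ((if x = 0 then 1 else 0) * (if y = 0 then 1 else 0)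
          * (if z = 0 then (1 : ℝ) else 0)) :=
  deg2_third_moment_general n x y z
end

section
/- Let n ≥ 1. For an n×n matrix A over F₂, let φ_A ∈ ℂ^{F₂ⁿ} be the phase state, φ_A(x) = 2^{−n/2}(−1)^{xᵀAx}. Then the uniform average over all A ∈ F₂^{n×n} of the twofold Kronecker product of the rank-one projector φ_A φ_A† with itself satisfies E_A[(φ_A φ_A†) ⊗ (φ_A φ_A†)] = 4^{−n}(I + SWAP) + 2^{−n} Φ⁺(Φ⁺)† − 2·4^{−n} Σ_{x ∈ F₂ⁿ} E_{(x,x),(x,x)}, as matrices on ℂ^{F₂ⁿ × F₂ⁿ}, where SWAP is the matrix with entries SWAP((a,b),(c,d)) = [a=d][b=c], Φ⁺ = 2^{−n/2} Σ_{x} e_{(x,x)} is the EPR state on 2n qubits, and E_{(x,x),(x,x)} is the matrix unit with a single 1 in entry ((x,x),(x,x)). -/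
open Matrix Kronecker

/-- The quadratic phase state `φ_A(x) = 2^{-n/2} (-1)^{xᵀAx}` as a vector in `ℂ^{F₂ⁿ}`. -/
noncomputable def phaseState (n : ℕ) (A : Matrix (Fin n) (Fin n) (ZMod 2)) :
    (Fin n → ZMod 2) → ℂ :=
  fun x => (Real.sqrt (2 ^ n) : ℂ)⁻¹ * (if x ⬝ᵥ A.mulVec x = 0 then 1 else -1)

/-- The rank-one projector `φ_A φ_A†`. -/
noncomputable def phaseProj (n : ℕ) (A : Matrix (Fin n) (Fin n) (ZMod 2)) :
    Matrix (Fin n → ZMod 2) (Fin n → ZMod 2) ℂ :=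
  Matrix.vecMulVec (phaseState n A) (star (phaseState n A))

/-- The swap operator on two `n`-qubit registers. -/
def swapOp (n : ℕ) :
    Matrix ((Fin n → ZMod 2) × (Fin n → ZMod 2)) ((Fin n → ZMod 2) × (Fin n → ZMod 2)) ℂ :=
  Matrix.of fun p q => if p.1 = q.2 ∧ p.2 = q.1 then 1 else 0

/-- The EPR state `Φ⁺ = 2^{-n/2} Σ_x e_{(x,x)}` on `2n` qubits. -/
noncomputable def eprState (n : ℕ) : (Fin n → ZMod 2) × (Fin n → ZMod 2) → ℂ :=
  fun p => if p.1 = p.2 then (Real.sqrt (2 ^ n) : ℂ)⁻¹ else 0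

/-!
Entrywise, `φ_A(a) φ_A(b) φ_A(c) φ_A(d) = 4⁻ⁿ (-1)^{tr (A M)}` with `M = aaᵀ + bbᵀ + ccᵀ + ddᵀ`
over `F₂`, so by orthogonality of the characters of `F₂^{n×n}` the average over `A` is
`4⁻ⁿ [M = 0]`. Since `x² = x` in `F₂`, the diagonal of `M = 0` forces `d = a + b + c`, and then
`M = 0` says that `(a + b)(a + c)ᵀ` is symmetric, i.e. that `a + b` and `a + c` are parallel.
Hence `M = 0` exactly when `a, b, c, d` match up in pairs, and the right-hand side is the
inclusion–exclusion formula for the indicator of that event.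
-/

lemma ZMod.two_cases : ∀ t : ZMod 2, t = 0 ∨ t = 1 := by decide

noncomputable def signChar : AddChar (ZMod 2) ℂ where
  toFun t := if t = 0 then 1 else -1
  map_zero_eq_one' := rfl
  map_add_eq_mul' := by
    have h1 : (1 : ZMod 2) ≠ 0 := by decide
    have h2 : (1 : ZMod 2) + 1 = 0 := by decide
    intro s t
    rcases ZMod.two_cases s with rfl | rfl <;> rcases ZMod.two_cases t with rfl | rfl <;>
      simp [h1, h2]

lemma signChar_apply (t : ZMod 2) : signChar t = if t = 0 then 1 else -1 := rfl

lemma signChar_injective : Function.Injective signChar := by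
  intro s t h
  rcases ZMod.two_cases s with rfl | rfl <;> rcases ZMod.two_cases t with rfl | rfl <;>
    norm_num [signChar_apply] at *

lemma star_signChar (t : ZMod 2) : star (signChar t) = signChar t := by
  rcases ZMod.two_cases t with rfl | rfl <;> norm_num [signChar_apply]

lemma sum_signChar_comp_eq_ite {G : Type*} [AddGroup G] [Fintype G] (f : G →+ ZMod 2) :
    ∑ g, signChar (f g) = if f = 0 then (Fintype.card G : ℂ) else 0 := by
  have hinj := AddChar.compAddMonoidHom_injective_right (A := G) signChar signChar_injective
  have h0 : signChar.compAddMonoidHom (0 : G →+ ZMod 2) = 0 := by ext; simp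
  simpa [hinj.eq_iff' h0] using AddChar.sum_eq_ite (signChar.compAddMonoidHom f)

lemma sum_signChar_trace_mul_eq_ite {m n : Type*} [Fintype m] [Fintype n] [DecidableEq m]
    [DecidableEq n] (M : Matrix n m (ZMod 2)) :
    ∑ A : Matrix m n (ZMod 2), signChar (trace (A * M))
      = if M = 0 then (2 : ℂ) ^ (Fintype.card m * Fintype.card n) else 0 := by
  let f : Matrix m n (ZMod 2) →+ ZMod 2 :=
    AddMonoidHom.mk' (fun A => trace (A * M)) fun A B => by rw [Matrix.add_mul, trace_add]
  have hf : f = 0 ↔ M = 0 := by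
    rw [ext_iff_trace_mul_left (B := 0), DFunLike.ext_iff]
    simp [f]
  have hcard : Fintype.card (Matrix m n (ZMod 2)) = 2 ^ (Fintype.card m * Fintype.card n) := by
    rw [Fintype.card_eq_nat_card]
    simp [Matrix, ← pow_mul, mul_comm]
  exact (sum_signChar_comp_eq_ite f).trans (by simp [hf, hcard])

lemma vecMulVec_eq_vecMulVec_swap_iff {ι : Type*} {u v : ι → ZMod 2} :
    vecMulVec u v = vecMulVec v u ↔ u = 0 ∨ v = 0 ∨ u = v := by
  constructor
  · intro h
    rcases eq_or_ne u 0 with hu | hu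
    · exact Or.inl hu
    obtain ⟨i, hi⟩ := Function.ne_iff.1 hu
    have hui : u i = 1 := (ZMod.two_cases _).resolve_left hi
    have hv : ∀ k, v k = v i * u k := fun k => by
      simpa [vecMulVec_apply, hui] using congr_fun₂ h i k
    rcases ZMod.two_cases (v i) with h0 | h1
    · exact Or.inr (Or.inl (funext fun k => by simp [hv k, h0]))
    · exact Or.inr (Or.inr (funext fun k => by simp [hv k, h1]))
  · rintro (rfl | rfl | rfl) <;> simp

lemma diag_vecMulVec_self {ι : Type*} (x : ι → ZMod 2) : diag (vecMulVec x x) = x := by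
  ext i
  simp [vecMulVec_apply, ← sq, ZMod.pow_card]

lemma vecMulVec_self_add_eq_zero_iff {ι : Type*} {a b c d : ι → ZMod 2} :
    vecMulVec a a + vecMulVec b b + vecMulVec c c + vecMulVec d d = 0 ↔
      (a = c ∧ b = d) ∨ (a = d ∧ b = c) ∨ (a = b ∧ c = d) := by
  constructor
  · intro h
    have hd : d = a + b + c := by
      have hdiag := congr_arg diag h
      simp only [diag_add, diag_vecMulVec_self, diag_zero] at hdiag
      rw [← ZModModule.neg_eq_self (a + b + c)]
      exact eq_neg_of_add_eq_zero_right hdiag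
    subst hd
    have hsym : vecMulVec (a + b) (a + c) = vecMulVec (a + c) (a + b) := by
      rw [← sub_eq_zero, ZModModule.sub_eq_add, ← h]
      ext i j
      simp only [Matrix.add_apply, vecMulVec_apply, Pi.add_apply]
      ring_nf
      reduce_mod_char
    have hab : a + b = 0 ↔ a = b := by rw [← ZModModule.sub_eq_add, sub_eq_zero]
    have hac : a + c = 0 ↔ a = c := by rw [← ZModModule.sub_eq_add, sub_eq_zero]
    rcases vecMulVec_eq_vecMulVec_swap_iff.1 hsym with h | h | h
    · obtain rfl := hab.1 h
      simp [ZModModule.add_self]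
    · obtain rfl := hac.1 h
      simp [add_right_comm a b a, ZModModule.add_self]
    · obtain rfl := add_left_cancel h
      simp [add_assoc, ZModModule.add_self]
  · rintro (⟨rfl, rfl⟩ | ⟨rfl, rfl⟩ | ⟨rfl, rfl⟩) <;>
    · ext i j
      simp only [Matrix.add_apply, vecMulVec_apply, Matrix.zero_apply]
      ring_nf
      reduce_mod_char

lemma dotProduct_mulVec_self_eq_trace {R ι : Type*} [CommSemiring R] [Fintype ι]
    (A : Matrix ι ι R) (x : ι → R) : x ⬝ᵥ A *ᵥ x = trace (A * vecMulVec x x) := by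
  rw [mul_vecMulVec, trace_vecMulVec, dotProduct_comm]

lemma inv_sqrt_two_pow_mul_self (n : ℕ) :
    (Real.sqrt (2 ^ n) : ℂ)⁻¹ * (Real.sqrt (2 ^ n) : ℂ)⁻¹ = ((2 : ℂ) ^ n)⁻¹ := by
  rw [← mul_inv, ← Complex.ofReal_mul, Real.mul_self_sqrt (by positivity)]
  norm_num

lemma phaseState_apply (n : ℕ) (A : Matrix (Fin n) (Fin n) (ZMod 2)) (x : Fin n → ZMod 2) :
    phaseState n A x = (Real.sqrt (2 ^ n) : ℂ)⁻¹ * signChar (trace (A * vecMulVec x x)) := by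
  rw [phaseState, signChar_apply, dotProduct_mulVec_self_eq_trace]

lemma star_phaseState (n : ℕ) (A : Matrix (Fin n) (Fin n) (ZMod 2)) :
    star (phaseState n A) = phaseState n A := by
  ext x
  simp [phaseState_apply, star_signChar, Complex.conj_ofReal]

lemma kronecker_phaseProj_apply (n : ℕ) (A : Matrix (Fin n) (Fin n) (ZMod 2))
    (a b c d : Fin n → ZMod 2) :
    (phaseProj n A ⊗ₖ phaseProj n A) (a, b) (c, d) = ((4 : ℂ) ^ n)⁻¹ *
      signChar (trace (A * (vecMulVec a a + vecMulVec b b + vecMulVec c c + vecMulVec d d))) := by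
  set s : ℂ := (Real.sqrt (2 ^ n) : ℂ)⁻¹
  have h4 : ((4 : ℂ) ^ n)⁻¹ = s * s * (s * s) := by
    rw [inv_sqrt_two_pow_mul_self, ← mul_inv, ← mul_pow]
    norm_num
  simp only [kroneckerMap_apply, phaseProj, star_phaseState, vecMulVec_apply, phaseState_apply,
    Matrix.mul_add, trace_add, AddChar.map_add_eq_mul, h4]
  ring

lemma sum_kronecker_phaseProj_apply (n : ℕ) (a b c d : Fin n → ZMod 2) :
    (∑ A : Matrix (Fin n) (Fin n) (ZMod 2), phaseProj n A ⊗ₖ phaseProj n A) (a, b) (c, d)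
      = ((4 : ℂ) ^ n)⁻¹ * (2 : ℂ) ^ (n ^ 2) *
        if (a = c ∧ b = d) ∨ (a = d ∧ b = c) ∨ (a = b ∧ c = d) then 1 else 0 := by
  simp only [Matrix.sum_apply, kronecker_phaseProj_apply, ← Finset.mul_sum,
    sum_signChar_trace_mul_eq_ite, vecMulVec_self_add_eq_zero_iff, Fintype.card_fin, sq]
  split_ifs <;> simp

lemma vecMulVec_eprState_apply (n : ℕ) (a b c d : Fin n → ZMod 2) :
    vecMulVec (eprState n) (star (eprState n)) (a, b) (c, d)
      = ((2 : ℂ) ^ n)⁻¹ * if a = b ∧ c = d then 1 else 0 := by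
  by_cases hab : a = b <;> by_cases hcd : c = d <;>
    simp [eprState, vecMulVec_apply, hab, hcd, Complex.conj_ofReal, inv_sqrt_two_pow_mul_self]

lemma sum_single_diag_apply {α : Type*} [Fintype α] [DecidableEq α] (a b c d : α) :
    (∑ x : α, Matrix.single (x, x) (x, x) (1 : ℂ)) (a, b) (c, d)
      = if a = b ∧ a = c ∧ a = d then 1 else 0 := by
  have hcond : ∀ x, ((x = a ∧ x = b) ∧ x = c ∧ x = d) ↔ (x = a ∧ a = b ∧ a = c ∧ a = d) := by
    grind
  simp only [Matrix.sum_apply, Matrix.single_apply, Prod.mk.injEq, hcond, ite_and,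
    Finset.sum_ite_eq', Finset.mem_univ, if_true]

-- Inclusion–exclusion: any two of the three pairings hold at once only when `a = b = c = d`.
lemma ite_pairing_eq {α : Type*} [DecidableEq α] (a b c d : α) :
    (if (a = c ∧ b = d) ∨ (a = d ∧ b = c) ∨ (a = b ∧ c = d) then (1 : ℂ) else 0)
      = (if a = c ∧ b = d then 1 else 0) + (if a = d ∧ b = c then 1 else 0)
        + (if a = b ∧ c = d then 1 else 0) - 2 * (if a = b ∧ a = c ∧ a = d then 1 else 0) := by
  split_ifs <;> grind

theorem phaseState_fourth_moment_general (n : ℕ) :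
    (2 ^ (n ^ 2) : ℂ)⁻¹ •
        ∑ A : Matrix (Fin n) (Fin n) (ZMod 2), (phaseProj n A ⊗ₖ phaseProj n A)
      = ((4 : ℂ) ^ n)⁻¹ • (1 + swapOp n)
        + ((2 : ℂ) ^ n)⁻¹ • Matrix.vecMulVec (eprState n) (star (eprState n))
        - (2 * ((4 : ℂ) ^ n)⁻¹) •
            ∑ x : Fin n → ZMod 2, Matrix.single (x, x) (x, x) (1 : ℂ) := by
  ext ⟨a, b⟩ ⟨c, d⟩
  simp only [Matrix.sub_apply, Matrix.add_apply, Matrix.smul_apply, smul_eq_mul,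
    sum_kronecker_phaseProj_apply, ite_pairing_eq, vecMulVec_eprState_apply,
    sum_single_diag_apply, Matrix.one_apply, swapOp, of_apply, Prod.mk.injEq]
  rw [show (4 : ℂ) ^ n = 2 ^ n * 2 ^ n by rw [← mul_pow]; norm_num]
  field_simp

/-- Fourth moment of random quadratic phase states:
`E_A[(φ_A φ_A†) ⊗ (φ_A φ_A†)] = 4^{-n}(I + SWAP) + 2^{-n} Φ⁺Φ⁺† - 2·4^{-n} Σ_x E_{(x,x),(x,x)}`. -/
theorem phaseState_fourth_moment (n : ℕ) (hn : 1 ≤ n) :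
    (2 ^ (n ^ 2) : ℂ)⁻¹ •
        ∑ A : Matrix (Fin n) (Fin n) (ZMod 2), (phaseProj n A ⊗ₖ phaseProj n A)
      = ((4 : ℂ) ^ n)⁻¹ • (1 + swapOp n)
        + ((2 : ℂ) ^ n)⁻¹ • Matrix.vecMulVec (eprState n) (star (eprState n))
        - (2 * ((4 : ℂ) ^ n)⁻¹) •
            ∑ x : Fin n → ZMod 2, Matrix.single (x, x) (x, x) (1 : ℂ) :=
  phaseState_fourth_moment_general n
end

section
/- Let σ be a positive definite complex d×d matrix with tr(σ) = 1, let ρ₁, …, ρ_m be density matrices (positive semidefinite with trace 1) on ℂᵈ, and let M be a Hermitian d×d matrix with operator norm ‖M‖ ≤ 1. Setting ρ̂_i := ρ_i σ^{−1} − I, one has ( Σ_{i=1}^m |tr(M(ρ_i − σ))| )² ≤ Σ_{i=1}^m Σ_{j=1}^m |tr(ρ̂_i ρ̂_j σ)|. -/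
/-!
Work in the inner product `⟪X, Y⟫_σ = tr (Y σ Xᴴ)` on matrices. Since `ρ̂ᵢ σ = ρᵢ - σ` and
`σ ρ̂ᵢᴴ = ρᵢ - σ`, the observable terms are `tr (M (ρᵢ - σ)) = ⟪ρ̂ᵢ, M⟫_σ`, the correlations are
`tr (ρ̂ⱼ ρ̂ᵢ σ) = ⟪ρ̂ᵢ, ρ̂ⱼ⟫_σ`, and `‖M‖_σ² = tr (M σ Mᴴ) ≤ tr σ = 1` because `M` is a contraction.
The inequality is then `(∑ |⟪uᵢ, x⟫|)² ≤ ‖x‖² ∑ |⟪uᵢ, uⱼ⟫|`, valid in any inner product space: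
choosing phases `cᵢ` with `cᵢ ⟪uᵢ, x⟫ = |⟪uᵢ, x⟫|`, the left side is `⟪∑ c̄ᵢ uᵢ, x⟫²`, and
Cauchy–Schwarz and `‖∑ c̄ᵢ uᵢ‖² ≤ ∑ |⟪uᵢ, uⱼ⟫|` finish.
-/

open Matrix
open scoped ComplexOrder InnerProductSpace

theorem RCLike.exists_norm_le_one_mul_eq_norm {𝕜 : Type*} [RCLike 𝕜] (z : 𝕜) :
    ∃ c : 𝕜, ‖c‖ ≤ 1 ∧ c * z = ‖z‖ := by
  refine ⟨starRingEnd 𝕜 z / ‖z‖, ?_, ?_⟩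
  · rw [norm_div, RCLike.norm_conj, RCLike.norm_ofReal, abs_norm]
    exact div_self_le_one _
  · rcases eq_or_ne z 0 with rfl | hz
    · simp
    · rw [div_mul_eq_mul_div, RCLike.conj_mul, pow_two, mul_div_assoc,
        div_self (RCLike.ofReal_ne_zero.mpr (norm_ne_zero_iff.mpr hz)), mul_one]

section InnerProductSpace

variable {𝕜 E ι : Type*} [RCLike 𝕜] [SeminormedAddCommGroup E] [InnerProductSpace 𝕜 E]
  [Fintype ι]

theorem norm_sum_smul_sq_le_sum_sum_norm_inner (u : ι → E) {c : ι → 𝕜}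
    (hc : ∀ i, ‖c i‖ ≤ 1) :
    ‖∑ i, c i • u i‖ ^ 2 ≤ ∑ i, ∑ j, ‖⟪u i, u j⟫_𝕜‖ := by
  rw [← inner_self_eq_norm_sq (𝕜 := 𝕜), sum_inner, map_sum]
  gcongr with i
  rw [inner_sum, map_sum]
  gcongr with j
  calc RCLike.re ⟪c i • u i, c j • u j⟫_𝕜 ≤ ‖⟪c i • u i, c j • u j⟫_𝕜‖ := RCLike.re_le_norm _
    _ = ‖c i‖ * ‖c j‖ * ‖⟪u i, u j⟫_𝕜‖ := by
      rw [inner_smul_left, inner_smul_right, norm_mul, norm_mul, RCLike.norm_conj, mul_assoc]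
    _ ≤ 1 * 1 * ‖⟪u i, u j⟫_𝕜‖ := by gcongr <;> exact hc _
    _ = ‖⟪u i, u j⟫_𝕜‖ := by ring

theorem sq_sum_norm_inner_le (u : ι → E) (x : E) :
    (∑ i, ‖⟪u i, x⟫_𝕜‖) ^ 2 ≤ ‖x‖ ^ 2 * ∑ i, ∑ j, ‖⟪u i, u j⟫_𝕜‖ := by
  choose c hc_le hc_mul using fun i ↦ RCLike.exists_norm_le_one_mul_eq_norm ⟪u i, x⟫_𝕜
  set v := ∑ i, starRingEnd 𝕜 (c i) • u i
  have hv : ⟪v, x⟫_𝕜 = ((∑ i, ‖⟪u i, x⟫_𝕜‖ : ℝ) : 𝕜) := by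
    simp only [v, sum_inner, inner_smul_left, RCLike.conj_conj, hc_mul, RCLike.ofReal_sum]
  have hsum : ∑ i, ‖⟪u i, x⟫_𝕜‖ ≤ ‖v‖ * ‖x‖ := by
    simpa [hv] using re_inner_le_norm (𝕜 := 𝕜) v x
  calc (∑ i, ‖⟪u i, x⟫_𝕜‖) ^ 2 ≤ (‖v‖ * ‖x‖) ^ 2 := by gcongr
    _ = ‖x‖ ^ 2 * ‖v‖ ^ 2 := by ring
    _ ≤ ‖x‖ ^ 2 * ∑ i, ∑ j, ‖⟪u i, u j⟫_𝕜‖ := by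
      gcongr
      exact norm_sum_smul_sq_le_sum_sum_norm_inner u fun i ↦ by simpa using hc_le i

end InnerProductSpace

namespace Matrix

variable {𝕜 n : Type*} [RCLike 𝕜] [Fintype n]

theorem re_dotProduct_star_self (a : n → 𝕜) :
    RCLike.re (a ⬝ᵥ star a) = ‖WithLp.toLp 2 a‖ ^ 2 := by
  rw [← EuclideanSpace.inner_eq_star_dotProduct, inner_self_eq_norm_sq]

theorem re_trace_mul_mul_conjTranspose_le [DecidableEq n] {W : Matrix n n 𝕜} (hW : W.PosSemidef)
    {M : Matrix n n 𝕜} (hM : ∀ v : EuclideanSpace 𝕜 n, ‖toEuclideanLin M v‖ ≤ ‖v‖) :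
    RCLike.re (M * W * Mᴴ).trace ≤ RCLike.re W.trace := by
  obtain ⟨k, v, rfl⟩ := posSemidef_iff_eq_sum_vecMulVec.mp hW
  simp only [Matrix.mul_sum, Matrix.sum_mul, trace_sum, map_sum, mul_vecMulVec, vecMulVec_mul,
    ← star_mulVec, trace_vecMulVec, re_dotProduct_star_self]
  gcongr with i
  exact hM (WithLp.toLp 2 (v i))

theorem mul_inv_sub_one_mul {A B : Matrix n n 𝕜} [DecidableEq n] (hB : IsUnit B.det) :
    (A * B⁻¹ - 1) * B = A - B := by
  rw [Matrix.sub_mul, Matrix.one_mul, Matrix.mul_assoc, nonsing_inv_mul _ hB, Matrix.mul_one]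

theorem mul_conjTranspose_mul_inv_sub_one {A B : Matrix n n 𝕜} [DecidableEq n]
    (hA : A.IsHermitian) (hB : B.IsHermitian) (hB' : IsUnit B.det) :
    B * (A * B⁻¹ - 1)ᴴ = A - B := by
  rw [← hA.sub hB, ← mul_inv_sub_one_mul hB', conjTranspose_mul, hB.eq]

end Matrix

theorem average_correlation_inequality_general (d m : ℕ)
    (σ : Matrix (Fin d) (Fin d) ℂ) (hσ : σ.PosDef) (hσtr : σ.trace = 1)
    (ρ : Fin m → Matrix (Fin d) (Fin d) ℂ)
    (hρ : ∀ i, (ρ i).PosSemidef)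
    (M : Matrix (Fin d) (Fin d) ℂ)
    (hMnorm : ∀ v : EuclideanSpace ℂ (Fin d), ‖Matrix.toEuclideanLin M v‖ ≤ ‖v‖) :
    (∑ i : Fin m, ‖(M * (ρ i - σ)).trace‖) ^ 2
      ≤ ∑ i : Fin m, ∑ j : Fin m,
          ‖((ρ i * σ⁻¹ - 1) * (ρ j * σ⁻¹ - 1) * σ).trace‖ := by
  let := σ.toMatrixSeminormedAddCommGroup hσ.posSemidef
  let := σ.toMatrixInnerProductSpace hσ.posSemidef
  have hσdet : IsUnit σ.det := (isUnit_iff_isUnit_det σ).mp hσ.isUnit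
  set ρhat := fun i ↦ ρ i * σ⁻¹ - 1
  have hσρhat : ∀ i, σ * (ρhat i)ᴴ = ρ i - σ := fun i ↦
    mul_conjTranspose_mul_inv_sub_one (hρ i).isHermitian hσ.isHermitian hσdet
  have h_obs : ∀ i, ⟪ρhat i, M⟫_ℂ = (M * (ρ i - σ)).trace := fun i ↦ by
    change (M * σ * (ρhat i)ᴴ).trace = _
    rw [Matrix.mul_assoc, hσρhat]
  have h_corr : ∀ i j, ⟪ρhat i, ρhat j⟫_ℂ = (ρhat j * ρhat i * σ).trace := fun i j ↦ by
    change (ρhat j * σ * (ρhat i)ᴴ).trace = _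
    rw [Matrix.mul_assoc, Matrix.mul_assoc, hσρhat, mul_inv_sub_one_mul hσdet]
  have hM_sq_le : ‖M‖ ^ 2 ≤ 1 := by
    rw [← inner_self_eq_norm_sq (𝕜 := ℂ) M]
    change RCLike.re (M * σ * Mᴴ).trace ≤ 1
    simpa [hσtr] using re_trace_mul_mul_conjTranspose_le hσ.posSemidef hMnorm
  calc (∑ i, ‖(M * (ρ i - σ)).trace‖) ^ 2 = (∑ i, ‖⟪ρhat i, M⟫_ℂ‖) ^ 2 := by simp only [h_obs]
    _ ≤ ‖M‖ ^ 2 * ∑ i, ∑ j, ‖⟪ρhat i, ρhat j⟫_ℂ‖ := sq_sum_norm_inner_le ρhat M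
    _ ≤ ∑ i, ∑ j, ‖⟪ρhat i, ρhat j⟫_ℂ‖ := by
      refine mul_le_of_le_one_left ?_ hM_sq_le
      positivity
    _ = _ := by simp only [h_corr]; exact Finset.sum_comm

/-- Key inequality behind the average-correlation lower bound: for a positive definite
reference state `σ`, density matrices `ρ_i`, and a Hermitian observable `M` with `‖M‖ ≤ 1`,
setting `ρ̂_i = ρ_i σ⁻¹ - I`, one has
`(Σ_i |tr(M(ρ_i - σ))|)² ≤ Σ_{i,j} |tr(ρ̂_i ρ̂_j σ)|`. -/
theorem average_correlation_inequality (d m : ℕ)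
    (σ : Matrix (Fin d) (Fin d) ℂ) (hσ : σ.PosDef) (hσtr : σ.trace = 1)
    (ρ : Fin m → Matrix (Fin d) (Fin d) ℂ)
    (hρ : ∀ i, (ρ i).PosSemidef) (hρtr : ∀ i, (ρ i).trace = 1)
    (M : Matrix (Fin d) (Fin d) ℂ) (hM : M.IsHermitian)
    (hMnorm : ∀ v : EuclideanSpace ℂ (Fin d), ‖Matrix.toEuclideanLin M v‖ ≤ ‖v‖) :
    (∑ i : Fin m, ‖(M * (ρ i - σ)).trace‖) ^ 2
      ≤ ∑ i : Fin m, ∑ j : Fin m,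
          ‖((ρ i * σ⁻¹ - 1) * (ρ j * σ⁻¹ - 1) * σ).trace‖ :=
  average_correlation_inequality_general d m σ hσ hσtr ρ hρ M hMnorm
end

section
/- Let ψ₁, …, ψ_m be unit vectors in ℂᵈ such that every pairwise inner product ⟨ψ_i, ψ_j⟩ is real and nonnegative, and let ρ = (1/m) Σ_{i=1}^m ψ_i ψ_i† be their uniform mixture. Then the largest eigenvalue of ρ is at least the square of the average overlap: λ_max(ρ) ≥ ( (1/m²) Σ_{i,j} ⟨ψ_i, ψ_j⟩ )². -/
/-!
With `w = ∑ i, ψ i`, test the Rayleigh quotient of `ρ` at `v = w / ‖w‖`. It is the mean of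
`|⟪ψ i, v⟫|²`, which (mean of squares ≥ square of mean, then the triangle inequality) is at least
`(|⟪w, v⟫| / m)² = ‖w‖² / m²`, and this is exactly the average overlap `s`. Since the `ψ i` are unit
vectors, `‖w‖ ≤ m`, so `s ≤ 1` and therefore `s² ≤ s`.
-/

open Matrix
open scoped InnerProductSpace

section InnerProductSpace

variable {𝕜 E ι : Type*} [RCLike 𝕜] [NormedAddCommGroup E] [InnerProductSpace 𝕜 E] [Fintype ι]

theorem norm_inner_sum_div_card_sq_le (ψ : ι → E) (v : E) :
    (‖⟪∑ i, ψ i, v⟫_𝕜‖ / Fintype.card ι) ^ 2 ≤ (∑ i, ‖⟪ψ i, v⟫_𝕜‖ ^ 2) / Fintype.card ι := by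
  calc (‖⟪∑ i, ψ i, v⟫_𝕜‖ / Fintype.card ι) ^ 2
      ≤ ((∑ i, ‖⟪ψ i, v⟫_𝕜‖) / Fintype.card ι) ^ 2 := by
        rw [sum_inner]
        gcongr
        exact norm_sum_le _ _
    _ ≤ (∑ i, ‖⟪ψ i, v⟫_𝕜‖ ^ 2) / Fintype.card ι := sum_div_card_sq_le_sum_sq_div_card

theorem exists_norm_eq_one_norm_sum_div_card_sq_le [Nontrivial E] (ψ : ι → E) :
    ∃ v : E, ‖v‖ = 1 ∧
      (‖∑ i, ψ i‖ / Fintype.card ι) ^ 2 ≤ (∑ i, ‖⟪ψ i, v⟫_𝕜‖ ^ 2) / Fintype.card ι := by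
  set w := ∑ i, ψ i with hw_def
  by_cases hw : w = 0
  · obtain ⟨x, hx⟩ := exists_ne (0 : E)
    refine ⟨(‖x‖⁻¹ : 𝕜) • x, norm_smul_inv_norm hx, ?_⟩
    rw [hw, norm_zero, zero_div, sq, zero_mul]
    positivity
  · refine ⟨(‖w‖⁻¹ : 𝕜) • w, norm_smul_inv_norm hw, ?_⟩
    have hinner : ‖⟪w, (‖w‖⁻¹ : 𝕜) • w⟫_𝕜‖ = ‖w‖ := by
      rw [inner_smul_right, inner_self_eq_norm_sq_to_K, norm_mul, norm_inv, norm_pow]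
      simp only [RCLike.norm_ofReal, abs_norm, sq]
      exact inv_mul_cancel_left₀ (norm_ne_zero_iff.mpr hw) _
    have h := norm_inner_sum_div_card_sq_le (𝕜 := 𝕜) ψ ((‖w‖⁻¹ : 𝕜) • w)
    rwa [← hw_def, hinner] at h

theorem norm_sum_le_card {ψ : ι → E} (hψ : ∀ i, ‖ψ i‖ ≤ 1) : ‖∑ i, ψ i‖ ≤ Fintype.card ι := by
  simpa using norm_sum_le_of_le Finset.univ fun i _ => hψ i

end InnerProductSpace

section Matrix

variable {𝕜 n ι : Type*} [RCLike 𝕜] [Fintype n] [Fintype ι]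

theorem star_dotProduct_eq_inner (x y : n → 𝕜) :
    star x ⬝ᵥ y = ⟪WithLp.toLp 2 x, WithLp.toLp 2 y⟫_𝕜 := by
  rw [EuclideanSpace.inner_toLp_toLp, dotProduct_comm]

theorem star_dotProduct_vecMulVec_mulVec (ψ v : n → 𝕜) :
    star v ⬝ᵥ (vecMulVec ψ (star ψ) *ᵥ v) =
      ((‖⟪WithLp.toLp 2 ψ, WithLp.toLp 2 v⟫_𝕜‖ ^ 2 : ℝ) : 𝕜) := by
  rw [vecMulVec_mulVec, dotProduct_smul, star_dotProduct_eq_inner, star_dotProduct_eq_inner,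
    ← inner_conj_symm (WithLp.toLp 2 v), op_smul_eq_mul, RCLike.conj_mul, RCLike.ofReal_pow]

theorem star_dotProduct_smul_sum_vecMulVec_mulVec (c : 𝕜) (ψ : ι → n → 𝕜) (v : n → 𝕜) :
    star v ⬝ᵥ ((c • ∑ i, vecMulVec (ψ i) (star (ψ i))) *ᵥ v) =
      c * ∑ i, ((‖⟪WithLp.toLp 2 (ψ i), WithLp.toLp 2 v⟫_𝕜‖ ^ 2 : ℝ) : 𝕜) := by
  simp only [smul_mulVec, dotProduct_smul, sum_mulVec, dotProduct_sum,
    star_dotProduct_vecMulVec_mulVec, smul_eq_mul]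

theorem sum_sum_re_star_dotProduct (ψ : ι → n → 𝕜) :
    ∑ i, ∑ j, RCLike.re (star (ψ i) ⬝ᵥ ψ j) = ‖∑ i, WithLp.toLp 2 (ψ i)‖ ^ 2 := by
  rw [norm_sq_eq_re_inner (𝕜 := 𝕜), sum_inner, map_sum]
  simp only [inner_sum, map_sum, star_dotProduct_eq_inner]

end Matrix

theorem mixture_top_eigenvalue_bound_general (d m : ℕ) (hd : 1 ≤ d)
    (ψ : Fin m → Fin d → ℂ)
    (hunit : ∀ i, star (ψ i) ⬝ᵥ ψ i = 1) :
    ∃ v : Fin d → ℂ, star v ⬝ᵥ v = 1 ∧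
      (((m : ℝ) ^ 2)⁻¹ * ∑ i : Fin m, ∑ j : Fin m, (star (ψ i) ⬝ᵥ ψ j).re) ^ 2
        ≤ (star v ⬝ᵥ
            (((m : ℂ)⁻¹ • ∑ i : Fin m,
              Matrix.vecMulVec (ψ i) (star (ψ i))).mulVec v)).re := by
  have : Nonempty (Fin d) := ⟨⟨0, hd⟩⟩
  set φ : Fin m → EuclideanSpace ℂ (Fin d) := fun i => WithLp.toLp 2 (ψ i)
  have hφ : ∀ i, ‖φ i‖ = 1 := fun i => by
    have h : ‖φ i‖ ^ 2 = 1 := by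
      rw [norm_sq_eq_re_inner (𝕜 := ℂ), ← star_dotProduct_eq_inner, hunit, RCLike.one_re]
    exact (pow_eq_one_iff_of_nonneg (norm_nonneg _) two_ne_zero).mp h
  obtain ⟨v, hv_norm, hv⟩ := exists_norm_eq_one_norm_sum_div_card_sq_le (𝕜 := ℂ) φ
  have hmean_le_one : ‖∑ i, φ i‖ / m ≤ 1 :=
    div_le_one_of_le₀ (by simpa using norm_sum_le_card fun i => (hφ i).le) m.cast_nonneg
  have hoverlap : ((m : ℝ) ^ 2)⁻¹ * ∑ i, ∑ j, (star (ψ i) ⬝ᵥ ψ j).re = (‖∑ i, φ i‖ / m) ^ 2 := by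
    rw [div_pow, div_eq_inv_mul]
    exact congrArg _ (sum_sum_re_star_dotProduct ψ)
  refine ⟨WithLp.ofLp v, ?_, ?_⟩
  · rw [star_dotProduct_eq_inner, WithLp.toLp_ofLp, inner_self_eq_norm_sq_to_K, hv_norm]
    norm_num
  · rw [hoverlap, star_dotProduct_smul_sum_vecMulVec_mulVec]
    calc ((‖∑ i, φ i‖ / m) ^ 2) ^ 2 ≤ (‖∑ i, φ i‖ / m) ^ 2 :=
          pow_le_of_le_one (by positivity) (pow_le_one₀ (by positivity) hmean_le_one) two_ne_zero
      _ ≤ (∑ i, ‖⟪φ i, v⟫_ℂ‖ ^ 2) / m := by simpa using hv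
      _ = _ := by
        rw [← map_sum, ← Complex.ofReal_natCast, ← Complex.ofReal_inv, Complex.re_ofReal_mul,
          Complex.coe_algebraMap, Complex.ofReal_re, WithLp.toLp_ofLp, div_eq_inv_mul]

/-- If `ψ₁, …, ψ_m` are unit vectors in `ℂᵈ` with pairwise real nonnegative inner products,
then the largest eigenvalue of their uniform mixture `ρ = (1/m) Σ_i ψ_i ψ_i†` — expressed as
the supremum of the Rayleigh quotient, witnessed by a unit vector — is at least the square of
the average overlap `(1/m²) Σ_{i,j} ⟨ψ_i, ψ_j⟩`. -/
theorem mixture_top_eigenvalue_bound (d m : ℕ) (hd : 1 ≤ d) (hm : 1 ≤ m)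
    (ψ : Fin m → Fin d → ℂ)
    (hunit : ∀ i, star (ψ i) ⬝ᵥ ψ i = 1)
    (hre : ∀ i j, (star (ψ i) ⬝ᵥ ψ j).im = 0 ∧ 0 ≤ (star (ψ i) ⬝ᵥ ψ j).re) :
    ∃ v : Fin d → ℂ, star v ⬝ᵥ v = 1 ∧
      (((m : ℝ) ^ 2)⁻¹ * ∑ i : Fin m, ∑ j : Fin m, (star (ψ i) ⬝ᵥ ψ j).re) ^ 2
        ≤ (star v ⬝ᵥ
            (((m : ℂ)⁻¹ • ∑ i : Fin m,
              Matrix.vecMulVec (ψ i) (star (ψ i))).mulVec v)).re :=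
  mixture_top_eigenvalue_bound_general d m hd ψ hunit
end

section
/- Let n ≥ 1 and let A, B be n×n matrices over F₂ with f_A ≠ f_B as functions (there exists x with xᵀAx ≠ xᵀBx). Define probability mass functions on F₂ⁿ × F₂ by P_A(x,y) = 2^{−n}·[y = xᵀAx] and P_B(x,y) = 2^{−n}·[y = xᵀBx]. Then d_TV(P_A, P_B) = Pr_{x ∼ F₂ⁿ}[xᵀAx ≠ xᵀBx] ≥ 1/4. -/
/-!
The total variation distance is computed fibrewise: over each `x` the two distributions are point
masses `2⁻ⁿ` at `f_A x` and at `f_B x`, which contribute `2⁻ⁿ` to the distance exactly when these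
values differ.

For the bound, `Q := f_{A-B}` is a quadratic form over `F₂` with some `Q a = 1`, and
`Q (x + a) = Q x + 1 + polar Q x a` where `polar Q · a` is additive. So translation by `a` maps
the zeros of `Q` in the kernel of `polar Q · a` into the support of `Q`, while the zeros outside
that kernel number at most `2ⁿ⁻¹`. Hence `2ⁿ - |supp Q| ≤ |supp Q| + 2ⁿ⁻¹`, i.e. `4 |supp Q| ≥ 2ⁿ`.
-/

open Matrix Finset

theorem sum_abs_ite_sub_ite {β : Type*} [Fintype β] [DecidableEq β] {c : ℝ} (hc : 0 ≤ c)
    (u v : β) :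
    ∑ y, |(if y = u then c else 0) - (if y = v then c else 0)| = if u = v then 0 else 2 * c := by
  split_ifs with huv
  · simp [huv]
  · have hdisj : ∀ y, |(if y = u then c else 0) - (if y = v then c else 0)|
        = (if y = u then c else 0) + (if y = v then c else 0) := by
      intro y
      rcases eq_or_ne y u with rfl | hu
      · simp [huv, abs_of_nonneg hc]
      rcases eq_or_ne y v with rfl | hv
      · simp [hu, abs_of_nonneg hc]
      · simp [hu, hv]
    simp only [hdisj, sum_add_distrib, sum_ite_eq', mem_univ, if_true]
    ring

theorem half_sum_abs_sub_graph_indicator {α β : Type*} [Fintype α] [Fintype β] [DecidableEq β]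
    (f g : α → β) {c : ℝ} (hc : 0 ≤ c) :
    (1 / 2) * ∑ p : α × β, |(if p.2 = f p.1 then c else 0) - (if p.2 = g p.1 then c else 0)|
      = #{x | f x ≠ g x} * c := by
  rw [Fintype.sum_prod_type]
  simp only [sum_abs_ite_sub_ite hc, sum_ite, sum_const_zero, sum_const, nsmul_eq_mul]
  ring

theorem AddMonoidHom.two_mul_card_eq_one_le {V : Type*} [AddCommGroup V] [Fintype V]
    [DecidableEq V] (L : V →+ ZMod 2) : 2 * #{x | L x = 1} ≤ Fintype.card V := by
  by_cases hL : ∃ d, L d = 1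
  · obtain ⟨d, hd⟩ := hL
    have htranslate : #{x | L x = 1} ≤ #{x | ¬ L x = 1} := by
      refine card_le_card_of_injOn (· + d) (fun x hx => ?_) (add_left_injective d).injOn
      simp only [coe_filter, mem_univ, true_and, Set.mem_ofPred_eq, map_add, hd] at hx ⊢
      rw [hx]; decide
    have := card_filter_add_card_filter_not (s := univ) (fun x => L x = 1)
    rw [card_univ] at this
    omega
  · push Not at hL
    simp [filter_false_of_mem fun x _ => hL x]

theorem ZMod.eq_one_iff_ne_zero_mod_two : ∀ t : ZMod 2, t = 1 ↔ t ≠ 0 := by decide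

theorem QuadraticMap.card_le_four_mul_card_ne_zero {R V : Type*} [CommRing R] [AddCommGroup V]
    [Module R V] [Module R (ZMod 2)] [Fintype V] [DecidableEq V]
    (Q : QuadraticMap R V (ZMod 2)) {a : V} (ha : Q a ≠ 0) :
    Fintype.card V ≤ 4 * #{x | Q x ≠ 0} := by
  let L : V →+ ZMod 2 := AddMonoidHom.mk' (fun x => polar Q x a) fun x y => Q.polar_add_left x y a
  have hQa : Q a = 1 := (ZMod.eq_one_iff_ne_zero_mod_two _).2 ha
  have hshift : #{x | Q x = 0 ∧ L x = 0} ≤ #{x | Q x ≠ 0} := by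
    refine card_le_card_of_injOn (· + a) (fun x hx => ?_) (add_left_injective a).injOn
    simp only [coe_filter, mem_univ, true_and, Set.mem_ofPred_eq] at hx ⊢
    obtain ⟨hQx, hLx : polar Q x a = 0⟩ := hx
    rw [QuadraticMap.map_add Q x a, hQx, hQa, hLx]
    decide
  have hcover : #{x | Q x = 0} ≤ #{x | Q x = 0 ∧ L x = 0} + #{x | L x = 1} := by
    refine (card_le_card fun x hx => ?_).trans (card_union_le _ _)
    simp only [mem_filter, mem_univ, true_and, mem_union] at hx ⊢
    by_cases hLx : L x = 0
    · exact .inl ⟨hx, hLx⟩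
    · exact .inr ((ZMod.eq_one_iff_ne_zero_mod_two _).2 hLx)
  have hsplit : #{x | Q x = 0} + #{x | Q x ≠ 0} = Fintype.card V :=
    card_filter_add_card_filter_not _
  have hhalf := L.two_mul_card_eq_one_le
  omega

theorem Matrix.toQuadraticForm'_apply {R ι : Type*} [CommRing R] [Fintype ι] [DecidableEq ι]
    (M : Matrix ι ι R) (x : ι → R) : M.toQuadraticForm' x = x ⬝ᵥ M *ᵥ x :=
  Matrix.toLinearMap₂'_apply' M x x

theorem deg2_example_distribution_tv_general (n : ℕ)
    (A B : Matrix (Fin n) (Fin n) (ZMod 2))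
    (h : ∃ x : Fin n → ZMod 2, x ⬝ᵥ A.mulVec x ≠ x ⬝ᵥ B.mulVec x) :
    ((1 / 2) * ∑ p : (Fin n → ZMod 2) × ZMod 2,
        |(if p.2 = p.1 ⬝ᵥ A.mulVec p.1 then ((2 : ℝ) ^ n)⁻¹ else 0)
          - (if p.2 = p.1 ⬝ᵥ B.mulVec p.1 then ((2 : ℝ) ^ n)⁻¹ else 0)|
      = ((Finset.univ.filter (fun x : Fin n → ZMod 2 =>
            x ⬝ᵥ A.mulVec x ≠ x ⬝ᵥ B.mulVec x)).card : ℝ) / 2 ^ n) ∧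
    ((1 / 4 : ℝ) ≤ ((Finset.univ.filter (fun x : Fin n → ZMod 2 =>
            x ⬝ᵥ A.mulVec x ≠ x ⬝ᵥ B.mulVec x)).card : ℝ) / 2 ^ n) := by
  refine ⟨?_, ?_⟩
  · rw [div_eq_mul_inv]
    exact half_sum_abs_sub_graph_indicator (fun x => x ⬝ᵥ A *ᵥ x) (fun x => x ⬝ᵥ B *ᵥ x)
      (by positivity)
  · obtain ⟨a, ha⟩ := h
    have hQ : ∀ x, (A - B).toQuadraticForm' x ≠ 0 ↔ x ⬝ᵥ A *ᵥ x ≠ x ⬝ᵥ B *ᵥ x := fun x => by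
      rw [toQuadraticForm'_apply, sub_mulVec, dotProduct_sub, sub_ne_zero]
    have hcard := (A - B).toQuadraticForm'.card_le_four_mul_card_ne_zero ((hQ a).2 ha)
    simp only [hQ, Fintype.card_fun, ZMod.card, Fintype.card_fin] at hcard
    rw [le_div_iff₀ (by positivity)]
    have hcard' : (2 : ℝ) ^ n ≤ 4 * #{x | x ⬝ᵥ A *ᵥ x ≠ x ⬝ᵥ B *ᵥ x} := by exact_mod_cast hcard
    linarith

/-- For distinct quadratic functions `f_A ≠ f_B`, the total variation distance between the
induced example distributions `P_A, P_B` on `F₂ⁿ × F₂` equals `Pr_x[xᵀAx ≠ xᵀBx]`, which is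
at least `1/4`. -/
theorem deg2_example_distribution_tv (n : ℕ) (hn : 1 ≤ n)
    (A B : Matrix (Fin n) (Fin n) (ZMod 2))
    (h : ∃ x : Fin n → ZMod 2, x ⬝ᵥ A.mulVec x ≠ x ⬝ᵥ B.mulVec x) :
    ((1 / 2) * ∑ p : (Fin n → ZMod 2) × ZMod 2,
        |(if p.2 = p.1 ⬝ᵥ A.mulVec p.1 then ((2 : ℝ) ^ n)⁻¹ else 0)
          - (if p.2 = p.1 ⬝ᵥ B.mulVec p.1 then ((2 : ℝ) ^ n)⁻¹ else 0)|
      = ((Finset.univ.filter (fun x : Fin n → ZMod 2 =>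
            x ⬝ᵥ A.mulVec x ≠ x ⬝ᵥ B.mulVec x)).card : ℝ) / 2 ^ n) ∧
    ((1 / 4 : ℝ) ≤ ((Finset.univ.filter (fun x : Fin n → ZMod 2 =>
            x ⬝ᵥ A.mulVec x ≠ x ⬝ᵥ B.mulVec x)).card : ℝ) / 2 ^ n) :=
  deg2_example_distribution_tv_general n A B h
end

section
/- Let n ≥ 1 and let A be any n×n matrix over F₂. Then the average over a uniformly random n×n matrix B over F₂ of the squared agreement probability satisfies 2^{−n²} Σ_{B ∈ F₂^{n×n}} ( Pr_{x ∼ F₂ⁿ}[xᵀAx = xᵀBx] )² ≤ 9/16 + (7/16)·2^{−n(n+1)/2}. -/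
/-!
If a quadratic form `Q` over `𝔽₂` is not identically zero, pick `h` with `Q h = 1`. The
difference `x ↦ Q (x + h) - Q x = 1 + polar Q x h` is affine and nonzero at `0`, so it is nonzero
on at least half of the space; and since translation by `h` preserves the number of zeros of `Q`,
at most half of the points where `Q (x + h) ≠ Q x` are zeros of `Q`. Hence `Pr[Q = 0] ≤ 3/4`.
Since `xᵀAx = xᵀBx` iff `x` is a zero of the form of `A - B`, the average is bounded by `9/16`
plus `7/16` times the proportion of matrices with vanishing form; those are alternating, so
determined by their entries off the diagonal up to symmetry, and there are at most `2^(n choose 2)`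
of them.
-/

open Matrix Finset

/-- Since `σ` preserves the number of points satisfying `p`, the points with `p x ∧ ¬p (σ x)` are
as many as those with `¬p x ∧ p (σ x)`. -/
theorem Equiv.Perm.two_mul_card_filter_add_card_filter_not_iff_le {α : Type*} [Fintype α]
    (p : α → Prop) [DecidablePred p] (σ : Equiv.Perm α) :
    2 * #{x | p x} + #{x | ¬(p x ↔ p (σ x))} ≤ 2 * Fintype.card α := by
  have hσ : ∑ x, (if p (σ x) then 1 else 0) = #{x | p x} := by
    rw [card_filter]; exact Equiv.sum_comp σ fun x => if p x then 1 else 0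
  have hpointwise : ∑ x, (2 * (if p x then 1 else 0) + (if ¬(p x ↔ p (σ x)) then 1 else 0)
      + (if p (σ x) then 1 else 0)) ≤ ∑ x, (2 + if p x then 1 else 0) :=
    sum_le_sum fun x _ => by split_ifs <;> simp_all
  simp only [sum_add_distrib, ← mul_sum, ← card_filter, hσ, sum_const, card_univ,
    smul_eq_mul] at hpointwise
  omega

theorem AddMonoidHom.card_le_two_mul_card_filter_eq_zero {M : Type*} [AddGroup M] [Fintype M]
    (f : M →+ ZMod 2) : Fintype.card M ≤ 2 * #{x | f x = 0} := by
  by_cases hf : ∃ v, f v ≠ 0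
  · obtain ⟨v, hv⟩ := hf
    have hflip := (Equiv.addRight v).two_mul_card_filter_add_card_filter_not_iff_le (¬f · = 0)
    have hflipAll : #{x | ¬(¬f x = 0 ↔ ¬f (Equiv.addRight v x) = 0)} = Fintype.card M := by
      have hZMod : ∀ a b : ZMod 2, b ≠ 0 → ¬(¬a = 0 ↔ ¬a + b = 0) := by decide
      rw [filter_true_of_mem fun x _ => ?_, card_univ]
      simpa only [Equiv.coe_addRight, map_add] using hZMod (f x) (f v) hv
    have hsplit := card_filter_add_card_filter_not (s := univ) (f · = 0)
    rw [card_univ] at hsplit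
    omega
  · simp only [not_exists, not_not] at hf
    rw [filter_true_of_mem fun x _ => hf x, card_univ]
    omega

namespace QuadraticMap

variable {M : Type*} [AddCommGroup M] [Module (ZMod 2) M] [Fintype M]

theorem four_mul_card_filter_eq_zero_le (Q : QuadraticMap (ZMod 2) M (ZMod 2)) (hQ : Q ≠ 0) :
    4 * #{x | Q x = 0} ≤ 3 * Fintype.card M := by
  obtain ⟨h, hh⟩ : ∃ h, Q h ≠ 0 := by
    by_contra! hzero; exact hQ (QuadraticMap.ext hzero)
  have hflip := (Equiv.addRight h).two_mul_card_filter_add_card_filter_not_iff_le (Q · = 0)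
  have hpolar := ((polarBilin Q).flip h).toAddMonoidHom.card_le_two_mul_card_filter_eq_zero
  have hchange : #{x | ¬(Q x = 0 ↔ Q (Equiv.addRight h x) = 0)} = #{x | polar Q x h = 0} := by
    have hZMod : ∀ a b c : ZMod 2, b ≠ 0 → (¬(a = 0 ↔ a + b + c = 0) ↔ c = 0) := by decide
    refine congrArg card (filter_congr fun x _ => ?_)
    have hexpand : Q (x + h) = Q x + Q h + polar Q x h := by rw [polar]; abel
    simpa only [Equiv.coe_addRight, hexpand] using hZMod (Q x) (Q h) (polar Q x h) hh
  simp only [LinearMap.toAddMonoidHom_coe, LinearMap.flip_apply, polarBilin_apply_apply]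
    at hpolar
  omega

theorem sq_card_filter_eq_zero_div_card_le (Q : QuadraticMap (ZMod 2) M (ZMod 2)) :
    ((#{x | Q x = 0} : ℝ) / Fintype.card M) ^ 2 ≤ 9 / 16 + 7 / 16 * if Q = 0 then 1 else 0 := by
  have hnonneg : 0 ≤ (#{x | Q x = 0} : ℝ) / Fintype.card M := by positivity
  split_ifs with hQ
  · have hle : (#{x | Q x = 0} : ℝ) / Fintype.card M ≤ 1 :=
      div_le_one_of_le₀ (mod_cast (card_filter_le _ _).trans_eq card_univ) (Nat.cast_nonneg _)
    nlinarith
  · have hcount : (4 : ℝ) * #{x | Q x = 0} ≤ 3 * Fintype.card M :=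
      mod_cast Q.four_mul_card_filter_eq_zero_le hQ
    have hle : (#{x | Q x = 0} : ℝ) / Fintype.card M ≤ 3 / 4 := by
      rw [div_le_iff₀ (mod_cast Fintype.card_pos)]
      linarith
    nlinarith

end QuadraticMap

namespace Matrix

variable {ι R : Type*} [Fintype ι] [DecidableEq ι] [CommRing R]

theorem toQuadraticForm'_apply_s19 (C : Matrix ι ι R) (x : ι → R) :
    C.toQuadraticForm' x = x ⬝ᵥ C *ᵥ x := by
  simp [toQuadraticForm', toLinearMap₂'_apply']

theorem diag_eq_zero_of_toQuadraticForm'_eq_zero {C : Matrix ι ι R}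
    (hC : C.toQuadraticForm' = 0) (i : ι) : C i i = 0 := by
  simpa [toQuadraticForm'_apply_s19] using congrArg (· (Pi.single i 1)) hC

theorem apply_eq_neg_of_toQuadraticForm'_eq_zero {C : Matrix ι ι R}
    (hC : C.toQuadraticForm' = 0) (i j : ι) : C i j = -C j i := by
  have hpolar : QuadraticMap.polar C.toQuadraticForm' (Pi.single i 1) (Pi.single j 1) = 0 := by
    simp [hC, QuadraticMap.polar]
  rw [eq_neg_iff_add_eq_zero, ← hpolar]
  simp [toQuadraticForm', LinearMap.BilinMap.polar_toQuadraticMap, toLinearMap₂'_apply']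

theorem card_filter_toQuadraticForm'_eq_zero_le [Fintype R] [DecidableEq R] :
    #{C : Matrix ι ι R | C.toQuadraticForm' = 0} ≤
      Fintype.card R ^ (Fintype.card ι).choose 2 := by
  classical
  let entries (C : Matrix ι ι R) (z : {z : Sym2 ι // ¬z.IsDiag}) : R := C z.1.out.1 z.1.out.2
  calc _ ≤ #(univ : Finset ({z : Sym2 ι // ¬z.IsDiag} → R)) := by
        refine card_le_card_of_injOn entries (fun _ _ => mem_coe.2 (mem_univ _)) ?_
        intro C hC C' hC' heq
        simp only [coe_filter, mem_univ, true_and, Set.mem_ofPred_eq] at hC hC'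
        ext i j
        by_cases hij : i = j
        · subst hij
          rw [diag_eq_zero_of_toQuadraticForm'_eq_zero hC,
            diag_eq_zero_of_toQuadraticForm'_eq_zero hC']
        have hout : s((s(i, j)).out.1, (s(i, j)).out.2) = s(i, j) := Quot.out_eq _
        have hentry := congrFun heq ⟨s(i, j), Sym2.mk_isDiag_iff.not.2 hij⟩
        rcases Sym2.eq_iff.1 hout.symm with ⟨h1, h2⟩ | ⟨h1, h2⟩
        · simpa [entries, ← h1, ← h2] using hentry
        · rw [apply_eq_neg_of_toQuadraticForm'_eq_zero hC,
            apply_eq_neg_of_toQuadraticForm'_eq_zero hC' i j]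
          simpa [entries, ← h1, ← h2] using hentry
    _ = _ := by rw [card_univ, Fintype.card_fun, Sym2.card_subtype_not_diag]

end Matrix

theorem Nat.choose_two_add_mul_succ_div_two (n : ℕ) : n.choose 2 + n * (n + 1) / 2 = n ^ 2 := by
  have htwice : n.choose 2 * 2 = n * (n - 1) := by
    rw [Nat.choose_two_right, Nat.div_mul_cancel (Nat.even_mul_pred_self n).two_dvd]
  have hsucc : n * (n + 1) / 2 = (n + 1).choose 2 := by
    rw [Nat.choose_two_right, Nat.add_sub_cancel, mul_comm]
  rw [hsucc, Nat.choose_succ_succ', Nat.choose_one_right]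
  cases n with
  | zero => simp
  | succ m => simp only [Nat.add_sub_cancel] at htwice; nlinarith

theorem Matrix.card_filter_toQuadraticForm'_eq_zero_mul_le (n : ℕ) :
    #{C : Matrix (Fin n) (Fin n) (ZMod 2) | C.toQuadraticForm' = 0} * 2 ^ (n * (n + 1) / 2) ≤
      2 ^ (n ^ 2) := by
  rw [← Nat.choose_two_add_mul_succ_div_two, pow_add]
  gcongr
  simpa using card_filter_toQuadraticForm'_eq_zero_le (ι := Fin n) (R := ZMod 2)

theorem deg2_average_squared_fidelity_general (n : ℕ)
    (A : Matrix (Fin n) (Fin n) (ZMod 2)) :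
    (2 ^ (n ^ 2) : ℝ)⁻¹ * ∑ B : Matrix (Fin n) (Fin n) (ZMod 2),
        (((Finset.univ.filter (fun x : Fin n → ZMod 2 =>
            x ⬝ᵥ A.mulVec x = x ⬝ᵥ B.mulVec x)).card : ℝ) / 2 ^ n) ^ 2
      ≤ 9 / 16 + (7 / 16) * ((2 : ℝ) ^ (n * (n + 1) / 2))⁻¹ := by
  classical
  let zeroFrac (C : Matrix (Fin n) (Fin n) (ZMod 2)) : ℝ :=
    (#{x | C.toQuadraticForm' x = 0} : ℝ) / 2 ^ n
  have hagree (B : Matrix (Fin n) (Fin n) (ZMod 2)) :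
      #{x | x ⬝ᵥ A *ᵥ x = x ⬝ᵥ B *ᵥ x} = #{x | (A - B).toQuadraticForm' x = 0} := by
    simp only [toQuadraticForm'_apply_s19, sub_mulVec, dotProduct_sub, sub_eq_zero]
  have hcard : Fintype.card (Matrix (Fin n) (Fin n) (ZMod 2)) = 2 ^ (n ^ 2) := by
    simp only [sq, pow_mul]
    exact (Fintype.card_fun ..).trans (by simp)
  calc _ = (2 ^ (n ^ 2) : ℝ)⁻¹ * ∑ C, zeroFrac C ^ 2 := by
        simp_rw [hagree]
        exact congrArg (_ * ·) ((Equiv.subLeft A).sum_comp fun C => zeroFrac C ^ 2)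
    _ ≤ (2 ^ (n ^ 2) : ℝ)⁻¹ * ∑ C : Matrix (Fin n) (Fin n) (ZMod 2),
          (9 / 16 + 7 / 16 * if C.toQuadraticForm' = 0 then 1 else 0) := by
        gcongr with C
        simpa using C.toQuadraticForm'.sq_card_filter_eq_zero_div_card_le
    _ = 9 / 16 + 7 / 16 *
          (#{C : Matrix (Fin n) (Fin n) (ZMod 2) | C.toQuadraticForm' = 0} / 2 ^ (n ^ 2)) := by
        rw [sum_add_distrib, ← mul_sum, sum_boole, sum_const, card_univ, hcard, nsmul_eq_mul]
        push_cast
        field_simp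
    _ ≤ _ := by
        gcongr
        rw [div_le_iff₀ (by positivity), le_inv_mul_iff₀ (by positivity), mul_comm]
        exact_mod_cast card_filter_toQuadraticForm'_eq_zero_mul_le n

/-- Average squared agreement probability of a fixed quadratic function with a uniformly
random one: `E_B[(Pr_x[xᵀAx = xᵀBx])²] ≤ 9/16 + (7/16)·2^{-n(n+1)/2}`. -/
theorem deg2_average_squared_fidelity (n : ℕ) (hn : 1 ≤ n)
    (A : Matrix (Fin n) (Fin n) (ZMod 2)) :
    (2 ^ (n ^ 2) : ℝ)⁻¹ * ∑ B : Matrix (Fin n) (Fin n) (ZMod 2),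
        (((Finset.univ.filter (fun x : Fin n → ZMod 2 =>
            x ⬝ᵥ A.mulVec x = x ⬝ᵥ B.mulVec x)).card : ℝ) / 2 ^ n) ^ 2
      ≤ 9 / 16 + (7 / 16) * ((2 : ℝ) ^ (n * (n + 1) / 2))⁻¹ :=
  deg2_average_squared_fidelity_general n A
end
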